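/- arXiv:2402.01089 — 2 statements merged into one kernel-verified Lean document; each statement's English description precedes it below -/
import Mathlib

section
/- Fix ε ∈ (0,1), let f : ℝ^d → [−1,1] be a fixed measurable function, and define the events A_f = { (1/n) Σ_{i=1}^n (y_i − f(x_i))² ≤ σ² − ε }, B = { (1/n) Σ_{i=1}^n z_i² ≥ σ² − ε/6 }, C = { (1/n) Σ_{i=1}^n z_i g(x_i) ≥ −ε/6 }, and D_f = { (1/n) Σ_{i=1}^n f(x_i) z_i ≥ ε/4 }. Then (i) A_f ∩ B ∩ C ⊆ D_f, and (ii) P(Bᶜ ∪ Cᶜ) ≤ 2 exp(−n ε² / 8³). -/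
/-! Part (i) is the pointwise expansion `(y - f)² = z² + 2 z g - 2 f z + (g - f)²`, averaged over
the sample. For part (ii), the variables `z_i²` and `z_i g(x_i)` are independent, have means `σ²`
and `0` (the noise is orthogonal to every bounded function of `x_i`), and take values in intervals
of length `4`; Hoeffding's inequality bounds each of `P(Bᶜ)`, `P(Cᶜ)` by
`exp(-nε²/288) ≤ exp(-nε²/8³)`. -/

open MeasureTheory ProbabilityTheory Real Finset

section Hoeffding

variable {Ω : Type*} [MeasurableSpace Ω] {μ : Measure Ω} [IsProbabilityMeasure μ]

theorem measure_card_mul_le_sum_le_of_mem_Icc {ι : Type*} [Fintype ι] {X : ι → Ω → ℝ}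
    (hindep : iIndepFun X μ) (hm : ∀ i, AEMeasurable (X i) μ) {a b : ℝ}
    (hX : ∀ i, ∀ᵐ ω ∂μ, X i ω ∈ Set.Icc a b) (hmean : ∀ i, μ[X i] = 0) {t : ℝ} (ht : 0 ≤ t) :
    μ {ω | Fintype.card ι * t ≤ ∑ i, X i ω} ≤
      ENNReal.ofReal (exp (-2 * Fintype.card ι * t ^ 2 / (b - a) ^ 2)) := by
  have h := HasSubgaussianMGF.measure_sum_ge_le_of_iIndepFun hindep (s := univ)
    (fun i _ => hasSubgaussianMGF_of_mem_Icc_of_integral_eq_zero (hm i) (hX i) (hmean i))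
    (mul_nonneg (Nat.cast_nonneg (Fintype.card ι)) ht)
  rw [ENNReal.le_ofReal_iff_toReal_le (measure_ne_top _ _) (exp_pos _).le]
  refine h.trans_eq (congrArg exp ?_)
  simp only [sum_const, card_univ, nsmul_eq_mul]
  push_cast
  rw [div_pow, Real.norm_eq_abs, sq_abs]
  set N : ℝ := (Fintype.card ι : ℝ)
  rcases eq_or_ne N 0 with hN | hN
  · simp [hN]
  · rw [show -(N * t) ^ 2 = N * -(N * t ^ 2) by ring,
      show 2 * (N * ((b - a) ^ 2 / 2 ^ 2)) = N * ((b - a) ^ 2 / 2) by ring,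
      mul_div_mul_left _ _ hN, div_div_eq_mul_div]
    ring

theorem measure_avg_lt_sub_le_of_mem_Icc {n : ℕ} {V : Fin n → Ω → ℝ} (hindep : iIndepFun V μ)
    (hm : ∀ i, AEMeasurable (V i) μ) {a b m δ : ℝ} (hV : ∀ i, ∀ᵐ ω ∂μ, V i ω ∈ Set.Icc a b)
    (hmean : ∀ i, μ[V i] = m) (hδ : 0 ≤ δ) :
    μ {ω | m - δ ≤ (1 / n : ℝ) * ∑ i, V i ω}ᶜ ≤
      ENNReal.ofReal (exp (-2 * n * δ ^ 2 / (b - a) ^ 2)) := by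
  have hdev := measure_card_mul_le_sum_le_of_mem_Icc (X := fun i ω => m - V i ω) (a := m - b)
    (b := m - a) (hindep.comp (fun _ v => m - v) fun _ => measurable_const.sub measurable_id)
    (fun i => (hm i).const_sub m)
    (fun i => by filter_upwards [hV i] with ω ⟨h1, h2⟩; constructor <;> linarith)
    (fun i => by
      rw [integral_sub (integrable_const m) (Integrable.of_mem_Icc a b (hm i) (hV i)), hmean i]
      simp) hδ
  rw [Fintype.card_fin, sub_sub_sub_cancel_left] at hdev
  refine (measure_mono fun ω hω => ?_).trans hdev
  simp only [Set.mem_compl_iff, Set.mem_ofPred_eq, not_le, sum_sub_distrib, sum_const, card_univ,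
    Fintype.card_fin, nsmul_eq_mul] at hω ⊢
  rcases n.eq_zero_or_pos with rfl | hn
  · simp
  · rw [one_div, inv_mul_lt_iff₀ (by exact_mod_cast hn)] at hω
    linarith

end Hoeffding

theorem integral_sub_mul_eq_zero_of_condExp_ae_eq {Ω : Type*} {m m₀ : MeasurableSpace Ω}
    {μ : Measure Ω} [IsFiniteMeasure μ] (hm : m ≤ m₀) {Y G : Ω → ℝ} (hY : Integrable Y μ)
    {R : ℝ} (hR : ∀ᵐ ω ∂μ, |Y ω| ≤ R) (hG : μ[Y|m] =ᵐ[μ] G) :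
    ∫ ω, (Y ω - G ω) * G ω ∂μ = 0 := by
  set c := μ[Y|m]
  have hcm : StronglyMeasurable[m] c := stronglyMeasurable_condExp
  have hc : ∀ᵐ ω ∂μ, ‖c ω‖ ≤ R := by
    simpa only [Real.norm_eq_abs] using ae_bdd_abs_condExp_of_ae_bdd_abs hR
  have hcY : Integrable (fun ω => c ω * Y ω) μ :=
    hY.bdd_mul (hcm.mono hm).aestronglyMeasurable hc
  have hcc : Integrable (fun ω => c ω * c ω) μ :=
    integrable_condExp.bdd_mul (hcm.mono hm).aestronglyMeasurable hc
  have hpull : ∫ ω, c ω * Y ω ∂μ = ∫ ω, c ω * c ω ∂μ :=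
    calc ∫ ω, c ω * Y ω ∂μ = ∫ ω, μ[c * Y|m] ω ∂μ := (integral_condExp hm).symm
      _ = ∫ ω, c ω * c ω ∂μ :=
        integral_congr_ae (condExp_mul_of_stronglyMeasurable_left hcm hcY hY)
  calc ∫ ω, (Y ω - G ω) * G ω ∂μ = ∫ ω, (c ω * Y ω - c ω * c ω) ∂μ :=
        integral_congr_ae (by filter_upwards [hG] with ω h; rw [← h]; ring)
    _ = 0 := by rw [integral_sub hcY hcc, hpull, sub_self]

theorem sub_sq_mem_Icc_and_sub_mul_mem_Icc {u v : ℝ} (hu : u ∈ Set.Icc (-1) 1) (hv : |v| ≤ 1) :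
    (u - v) ^ 2 ∈ Set.Icc 0 4 ∧ (u - v) * v ∈ Set.Icc (-2) 2 := by
  obtain ⟨hv₁, hv₂⟩ := abs_le.1 hv
  obtain ⟨hu₁, hu₂⟩ := hu
  exact ⟨⟨sq_nonneg _, by nlinarith⟩, by constructor <;> nlinarith⟩

theorem mul_sum_noise_terms_le_mul_sum_sq_sub {ι : Type*} [Fintype ι] {c : ℝ} (hc : 0 ≤ c)
    (y g f : ι → ℝ) :
    c * ∑ i, (y i - g i) ^ 2 + 2 * (c * ∑ i, (y i - g i) * g i)
      - 2 * (c * ∑ i, f i * (y i - g i)) ≤ c * ∑ i, (y i - f i) ^ 2 := by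
  have hexpand : ∑ i, (y i - f i) ^ 2 = ∑ i, (y i - g i) ^ 2 + 2 * ∑ i, (y i - g i) * g i
      - 2 * ∑ i, f i * (y i - g i) + ∑ i, (g i - f i) ^ 2 := by
    simp only [mul_sum, ← sum_add_distrib, ← sum_sub_distrib]
    exact sum_congr rfl fun i _ => by ring
  rw [hexpand]
  nlinarith [mul_nonneg hc (sum_nonneg (s := univ) fun i _ => sq_nonneg (g i - f i))]

theorem statement5_general {Ω : Type*} [MeasurableSpace Ω] (P : Measure Ω) [IsProbabilityMeasure P]
    (n d : ℕ)
    (x : Fin n → Ω → EuclideanSpace ℝ (Fin d)) (y : Fin n → Ω → ℝ)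
    (hxm : ∀ i, Measurable (x i)) (hym : ∀ i, Measurable (y i))
    (hy1 : ∀ i ω, y i ω ∈ Set.Icc (-1 : ℝ) 1)
    (hindep : iIndepFun (fun i ω => (x i ω, y i ω)) P)
    (g : EuclideanSpace ℝ (Fin d) → ℝ) (hg : Measurable g)
    (hreg : ∀ i, P[y i|MeasurableSpace.comap (x i) inferInstance] =ᵐ[P]
      fun ω => g (x i ω))
    (σ2 : ℝ) (hσ : ∀ i, σ2 = ∫ ω, (y i ω - g (x i ω)) ^ 2 ∂P)
    (ε : ℝ) (hε : ε ∈ Set.Ioo (0 : ℝ) 1)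
    (f : EuclideanSpace ℝ (Fin d) → ℝ) :
    ({ω | (1 / n : ℝ) * ∑ i, (y i ω - f (x i ω)) ^ 2 ≤ σ2 - ε} ∩
        {ω | σ2 - ε / 6 ≤ (1 / n : ℝ) * ∑ i, (y i ω - g (x i ω)) ^ 2} ∩
        {ω | -(ε / 6) ≤ (1 / n : ℝ) * ∑ i, (y i ω - g (x i ω)) * g (x i ω)} ⊆
      {ω | ε / 4 ≤ (1 / n : ℝ) * ∑ i, f (x i ω) * (y i ω - g (x i ω))}) ∧
    P ({ω | σ2 - ε / 6 ≤ (1 / n : ℝ) * ∑ i, (y i ω - g (x i ω)) ^ 2}ᶜ ∪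
        {ω | -(ε / 6) ≤ (1 / n : ℝ) * ∑ i, (y i ω - g (x i ω)) * g (x i ω)}ᶜ) ≤
      ENNReal.ofReal (2 * Real.exp (-(n : ℝ) * ε ^ 2 / 8 ^ 3)) := by
  obtain ⟨hε₀, -⟩ := hε
  refine ⟨fun ω ⟨⟨hA, hB⟩, hC⟩ => ?_, ?_⟩
  · have := mul_sum_noise_terms_le_mul_sum_sq_sub (by positivity : (0 : ℝ) ≤ 1 / n)
      (fun i => y i ω) (fun i => g (x i ω)) (fun i => f (x i ω))
    simp only [Set.mem_ofPred_eq] at hA hB hC ⊢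
    linarith
  have hy : ∀ i, Integrable (y i) P := fun i =>
    Integrable.of_mem_Icc (-1) 1 (hym i).aemeasurable (ae_of_all _ (hy1 i))
  have hybdd : ∀ i, ∀ᵐ ω ∂P, |y i ω| ≤ 1 := fun i => ae_of_all _ fun ω => abs_le.2 (hy1 i ω)
  have hgbdd : ∀ i, ∀ᵐ ω ∂P, |g (x i ω)| ≤ 1 := fun i => by
    filter_upwards [hreg i, ae_bdd_abs_condExp_of_ae_bdd_abs (hybdd i)] with ω h1 h2
    rwa [← h1]
  have hrange : ∀ i, ∀ᵐ ω ∂P, (y i ω - g (x i ω)) ^ 2 ∈ Set.Icc 0 4 ∧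
      (y i ω - g (x i ω)) * g (x i ω) ∈ Set.Icc (-2) 2 := fun i => by
    filter_upwards [hgbdd i] with ω hω using sub_sq_mem_Icc_and_sub_mul_mem_Icc (hy1 i ω) hω
  have hB := measure_avg_lt_sub_le_of_mem_Icc
    (hindep.comp (fun _ p => (p.2 - g p.1) ^ 2) fun _ => by fun_prop) (fun i => by fun_prop)
    (fun i => (hrange i).mono fun _ h => h.1) (fun i => (hσ i).symm) (δ := ε / 6) (by positivity)
  have hC := measure_avg_lt_sub_le_of_mem_Icc
    (hindep.comp (fun _ p => (p.2 - g p.1) * g p.1) fun _ => by fun_prop) (fun i => by fun_prop)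
    (fun i => (hrange i).mono fun _ h => h.2)
    (fun i => integral_sub_mul_eq_zero_of_condExp_ae_eq (hxm i).comap_le (hy i) (hybdd i) (hreg i))
    (δ := ε / 6) (by positivity)
  rw [sub_zero] at hB
  rw [zero_sub, sub_neg_eq_add, two_add_two_eq_four] at hC
  have hexp : exp (-2 * n * (ε / 6) ^ 2 / 4 ^ 2) ≤ exp (-(n : ℝ) * ε ^ 2 / 8 ^ 3) := by
    rw [exp_le_exp]
    nlinarith [(by positivity : 0 ≤ (n : ℝ) * ε ^ 2)]
  calc _ ≤ _ := measure_union_le _ _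
    _ ≤ ENNReal.ofReal (exp (-(n : ℝ) * ε ^ 2 / 8 ^ 3)) +
        ENNReal.ofReal (exp (-(n : ℝ) * ε ^ 2 / 8 ^ 3)) := by
      gcongr
      · exact hB.trans (ENNReal.ofReal_le_ofReal hexp)
      · exact hC.trans (ENNReal.ofReal_le_ofReal hexp)
    _ = _ := by rw [← ENNReal.ofReal_add (by positivity) (by positivity), two_mul]

/-- for a fixed `f : ℝ^d → [−1,1]`, with `z_i = y_i − g(x_i)` the noise and
`σ² = E[Var[y|x]]`, the events
`A_f = {(1/n)Σ(y_i − f(x_i))² ≤ σ² − ε}`, `B = {(1/n)Σ z_i² ≥ σ² − ε/6}`,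
`C = {(1/n)Σ z_i g(x_i) ≥ −ε/6}`, `D_f = {(1/n)Σ f(x_i) z_i ≥ ε/4}` satisfy
(i) `A_f ∩ B ∩ C ⊆ D_f` and (ii) `P(Bᶜ ∪ Cᶜ) ≤ 2 exp(−nε²/8³)`. -/
theorem statement5 {Ω : Type*} [MeasurableSpace Ω] (P : Measure Ω) [IsProbabilityMeasure P]
    (n d : ℕ) (hn : 0 < n)
    (x : Fin n → Ω → EuclideanSpace ℝ (Fin d)) (y : Fin n → Ω → ℝ)
    (hxm : ∀ i, Measurable (x i)) (hym : ∀ i, Measurable (y i))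
    (hy1 : ∀ i ω, y i ω ∈ Set.Icc (-1 : ℝ) 1)
    (hindep : iIndepFun (fun i ω => (x i ω, y i ω)) P)
    (hident : ∀ i j, IdentDistrib (fun ω => (x i ω, y i ω)) (fun ω => (x j ω, y j ω)) P P)
    (g : EuclideanSpace ℝ (Fin d) → ℝ) (hg : Measurable g)
    (hreg : ∀ i, P[y i|MeasurableSpace.comap (x i) inferInstance] =ᵐ[P]
      fun ω => g (x i ω))
    (σ2 : ℝ) (hσpos : 0 < σ2) (hσ : ∀ i, σ2 = ∫ ω, (y i ω - g (x i ω)) ^ 2 ∂P)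
    (ε : ℝ) (hε : ε ∈ Set.Ioo (0 : ℝ) 1)
    (f : EuclideanSpace ℝ (Fin d) → ℝ) (hf : Measurable f)
    (hf1 : ∀ v, f v ∈ Set.Icc (-1 : ℝ) 1) :
    ({ω | (1 / n : ℝ) * ∑ i, (y i ω - f (x i ω)) ^ 2 ≤ σ2 - ε} ∩
        {ω | σ2 - ε / 6 ≤ (1 / n : ℝ) * ∑ i, (y i ω - g (x i ω)) ^ 2} ∩
        {ω | -(ε / 6) ≤ (1 / n : ℝ) * ∑ i, (y i ω - g (x i ω)) * g (x i ω)} ⊆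
      {ω | ε / 4 ≤ (1 / n : ℝ) * ∑ i, f (x i ω) * (y i ω - g (x i ω))}) ∧
    P ({ω | σ2 - ε / 6 ≤ (1 / n : ℝ) * ∑ i, (y i ω - g (x i ω)) ^ 2}ᶜ ∪
        {ω | -(ε / 6) ≤ (1 / n : ℝ) * ∑ i, (y i ω - g (x i ω)) * g (x i ω)}ᶜ) ≤
      ENNReal.ofReal (2 * Real.exp (-(n : ℝ) * ε ^ 2 / 8 ^ 3)) :=
  statement5_general P n d x y hxm hym hy1 hindep g hg hreg σ2 hσ ε hε f
end

section
/- Let u, v, x ∈ ℝ^d satisfy ‖u‖ ≤ 1.01, ‖v‖ ≤ 1.01, |⟨u, v⟩| ≤ 1/100, and ‖x‖ ≤ 1.1. Then it is not the case that both ⟨x, u⟩ ≥ 0.8 and ⟨x, v⟩ ≥ 0.8. -/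
/-! Summing the two inequalities gives `⟪x, u + v⟫ ≥ 1.6`, while near-orthogonality keeps
`‖u + v‖² ≤ 2 · 1.01² + 2/100`, so Cauchy–Schwarz bounds `⟪x, u + v⟫²` by
`1.1² · 2.0602 < 1.6²`. -/

open RealInnerProductSpace

section

variable {E : Type*} [NormedAddCommGroup E] [InnerProductSpace ℝ E]

theorem norm_add_sq_le_of_inner_le {u v : E} {r ε : ℝ} (hu : ‖u‖ ≤ r) (hv : ‖v‖ ≤ r)
    (huv : ⟪u, v⟫ ≤ ε) : ‖u + v‖ ^ 2 ≤ 2 * r ^ 2 + 2 * ε := by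
  rw [norm_add_sq_real]
  nlinarith [norm_nonneg u, norm_nonneg v]

theorem sq_inner_add_le_of_inner_le {u v x : E} {r ε R : ℝ} (hu : ‖u‖ ≤ r) (hv : ‖v‖ ≤ r)
    (huv : ⟪u, v⟫ ≤ ε) (hx : ‖x‖ ≤ R) :
    (⟪x, u⟫ + ⟪x, v⟫) ^ 2 ≤ R ^ 2 * (2 * r ^ 2 + 2 * ε) := by
  rw [← inner_add_right, ← sq_abs]
  calc |⟪x, u + v⟫| ^ 2 ≤ (‖x‖ * ‖u + v‖) ^ 2 := by
        gcongr; exact abs_real_inner_le_norm x (u + v)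
    _ = ‖x‖ ^ 2 * ‖u + v‖ ^ 2 := mul_pow _ _ _
    _ ≤ R ^ 2 * (2 * r ^ 2 + 2 * ε) := by
        gcongr
        exact norm_add_sq_le_of_inner_le hu hv huv

end

/-- a point in the ball of radius 1.1 can have inner product at least 0.8
with at most one of two near-orthogonal directions of norm at most 1.01. -/
theorem statement16 {d : ℕ} (u v x : EuclideanSpace ℝ (Fin d))
    (hu : ‖u‖ ≤ 1.01) (hv : ‖v‖ ≤ 1.01) (huv : |(inner ℝ u v : ℝ)| ≤ 1 / 100)
    (hx : ‖x‖ ≤ 1.1) :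
    ¬((0.8 : ℝ) ≤ (inner ℝ x u : ℝ) ∧ (0.8 : ℝ) ≤ (inner ℝ x v : ℝ)) := by
  rintro ⟨hxu, hxv⟩
  have hbound := sq_inner_add_le_of_inner_le hu hv ((le_abs_self _).trans huv) hx
  nlinarith
end
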